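/- arXiv:1711.08860 — 2 statements merged into one kernel-verified Lean document; each statement's English description precedes it below -/
import Mathlib

section
/- Let κ denote the Iwasawa projection from GL_n(ℝ) to O(n). Then the image under κ of the set of positive definite symmetric matrices equals the set of orthogonal matrices all of whose trailing principal minors (determinants of the bottom-right r×r submatrices) are positive. -/
/-!
A positive definite `g = b k` has positive principal minors, and since `b` is upper triangular
the trailing `r × r` block of `b k` is the product of the trailing blocks of `b` and `k`; the
block of `b` has positive determinant, hence so does the block of `k`.

Conversely, invertible trailing blocks of `k` let one clear, row by row, the entries of `k` to
the right of the diagonal by adding multiples of the rows below, giving an upper unitriangular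
`N` with `L = N k` lower triangular. The trailing minors of `L` are those of `k`, so its diagonal
entries, ratios of consecutive trailing minors, are positive. Then `g = Lᵀ L` is positive
definite and `g = b k` with `b = Lᵀ N` upper triangular with diagonal `L i i > 0`.
-/

open Matrix

/-- The determinant of the bottom-right `r × r` submatrix of `B`. -/
def trailMinor {n : ℕ} (B : Matrix (Fin n) (Fin n) ℝ) (r : ℕ) (h : r ≤ n) : ℝ :=
  (B.submatrix (fun i : Fin r => (⟨n - r + i, by omega⟩ : Fin n))
    (fun i : Fin r => (⟨n - r + i, by omega⟩ : Fin n))).det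

def trailEmb {n r : ℕ} (h : r ≤ n) : Fin r → Fin n := fun i => ⟨n - r + i, by omega⟩

section trailEmb

variable {n r : ℕ}

theorem trailMinor_eq_det (B : Matrix (Fin n) (Fin n) ℝ) (h : r ≤ n) :
    trailMinor B r h = (B.submatrix (trailEmb h) (trailEmb h)).det :=
  rfl

theorem trailMinor_zero (B : Matrix (Fin n) (Fin n) ℝ) (h : 0 ≤ n) : trailMinor B 0 h = 1 :=
  det_isEmpty

theorem trailEmb_strictMono (h : r ≤ n) : StrictMono (trailEmb h) := fun _ _ hij => by
  simp only [trailEmb, Fin.mk_lt_mk]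
  omega

theorem mem_range_trailEmb (h : r ≤ n) {j : Fin n} :
    j ∈ Set.range (trailEmb h) ↔ n - r ≤ j := by
  refine ⟨?_, fun hj => ⟨⟨j - (n - r), by omega⟩, Fin.ext ?_⟩⟩
  · rintro ⟨i, rfl⟩
    simp [trailEmb]
  · simp only [trailEmb]
    omega

theorem isUpperSet_range_trailEmb (h : r ≤ n) : IsUpperSet (Set.range (trailEmb h)) :=
  fun _ _ hij hi => (mem_range_trailEmb h).2 <|
    le_trans ((mem_range_trailEmb h).1 hi) (Fin.le_def.1 hij)

theorem trailEmb_succ (h : r + 1 ≤ n) (i : Fin r) :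
    trailEmb h i.succ = trailEmb (Nat.le_of_succ_le h) i :=
  Fin.ext <| by simp only [trailEmb, Fin.val_succ]; omega

end trailEmb

namespace Matrix

section Triangular

variable {ι m o p R : Type*} [LinearOrder ι] {e : m → ι}

theorem IsUpperTriangular.submatrix_of_strictMono [Zero R] [Preorder m] {b : Matrix ι ι R}
    (hb : b.IsUpperTriangular) (he : StrictMono e) : (b.submatrix e e).IsUpperTriangular :=
  fun _ _ hij => hb (he hij)

theorem IsLowerTriangular.submatrix_of_strictMono [Zero R] [Preorder m] {L : Matrix ι ι R}
    (hL : L.IsLowerTriangular) (he : StrictMono e) : (L.submatrix e e).IsLowerTriangular :=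
  fun _ _ hij => hL (he hij)

theorem IsUpperTriangular.submatrix_mul [Fintype ι] [Fintype m] [NonUnitalNonAssocSemiring R]
    {b : Matrix ι ι R} (hb : b.IsUpperTriangular) (he : Function.Injective e)
    (hup : IsUpperSet (Set.range e)) (k : Matrix ι o R) (f : p → o) :
    (b * k).submatrix e f = b.submatrix e e * k.submatrix e f := by
  ext i j
  refine (Fintype.sum_of_injective e he _ _ (fun l hl => ?_) fun _ => rfl).symm
  change b (e i) l * k l (f j) = 0
  rw [hb (lt_of_not_ge fun hil => hl (hup hil ⟨i, rfl⟩)), zero_mul]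

theorem IsUpperTriangular.diag_mul [Fintype ι] [NonUnitalNonAssocSemiring R]
    {M N : Matrix ι ι R} (hM : M.IsUpperTriangular) (hN : N.IsUpperTriangular) :
    (M * N).diag = M.diag * N.diag := by
  ext i
  refine Finset.sum_eq_single i (fun l _ hli => ?_) (by simp)
  change M i l * N l i = 0
  rcases lt_or_gt_of_ne hli with hl | hl
  · rw [hM hl, zero_mul]
  · rw [hN hl, mul_zero]

end Triangular

section Elimination

variable {ι m R : Type*} [CommRing R] [Fintype ι] [Fintype m] [DecidableEq m]

theorem exists_vecMul_apply_eq_of_isUnit_det_submatrix (A : Matrix ι ι R) {e : m → ι}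
    (he : Function.Injective e) (hA : IsUnit (A.submatrix e e).det) (x : m → R) :
    ∃ w : ι → R, (∀ l ∉ Set.range e, w l = 0) ∧ ∀ j, (w ᵥ* A) (e j) = x j := by
  set u := x ᵥ* (A.submatrix e e)⁻¹
  refine ⟨Function.extend e u 0, fun l hl => Function.extend_apply' _ _ _ hl, fun j => ?_⟩
  have hsum : (Function.extend e u 0 ᵥ* A) (e j) = (u ᵥ* A.submatrix e e) j :=
    (Fintype.sum_of_injective e he _ _
      (fun l hl => by rw [Function.extend_apply' _ _ _ hl, Pi.zero_apply, zero_mul])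
      fun i => by rw [he.extend_apply]; rfl).symm
  rw [hsum, vecMul_vecMul, nonsing_inv_mul _ hA, vecMul_one]

theorem exists_isUpperTriangular_mul_isLowerTriangular {n : ℕ} (A : Matrix (Fin n) (Fin n) R)
    (hA : ∀ r (h : r < n), IsUnit (A.submatrix (trailEmb h.le) (trailEmb h.le)).det) :
    ∃ N : Matrix (Fin n) (Fin n) R,
      N.IsUpperTriangular ∧ (∀ i, N i i = 1) ∧ (N * A).IsLowerTriangular := by
  -- Row `i` of `N` is `Pi.single i 1 + w`, with `w` supported on the indices `> i`: these form
  -- the trailing block of size `n - 1 - i`.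
  have hrow : ∀ i : Fin n, ∃ w : Fin n → R,
      (∀ l ≤ i, w l = 0) ∧ ∀ j, i < j → A i j + (w ᵥ* A) j = 0 := by
    intro i
    have h : n - 1 - i < n := by omega
    obtain ⟨w, hw0, hw⟩ := exists_vecMul_apply_eq_of_isUnit_det_submatrix A
      (trailEmb_strictMono h.le).injective (hA _ h) fun m => -A i (trailEmb h.le m)
    refine ⟨w, fun l hl => hw0 l fun hl' => ?_, fun j hj => ?_⟩
    · have := (mem_range_trailEmb h.le).1 hl'
      rw [Fin.le_def] at hl
      omega
    · obtain ⟨m, rfl⟩ := (mem_range_trailEmb h.le (j := j)).2 (by rw [Fin.lt_def] at hj; omega)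
      rw [hw, add_neg_cancel]
  choose w hw0 hw using hrow
  refine ⟨1 + of w, fun i j (hji : j < i) => ?_, fun i => ?_, fun i j hij => ?_⟩
  · rw [add_apply, of_apply, one_apply_ne (ne_of_gt hji), hw0 i j hji.le, add_zero]
  · simp [hw0 i i le_rfl]
  · rw [add_mul, one_mul, add_apply]
    exact hw i j hij

end Elimination

section Minors

variable {n r : ℕ} {R : Type*} [CommRing R]

theorem det_submatrix_trailEmb_succ {L : Matrix (Fin n) (Fin n) R} (hL : L.IsLowerTriangular)
    (h : r + 1 ≤ n) {i : Fin n} (hi : (i : ℕ) + r + 1 = n) :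
    (L.submatrix (trailEmb h) (trailEmb h)).det = L i i *
      (L.submatrix (trailEmb (Nat.le_of_succ_le h)) (trailEmb (Nat.le_of_succ_le h))).det := by
  have hzero : trailEmb h 0 = i := Fin.ext <| by simp only [trailEmb, Fin.val_zero]; omega
  rw [det_of_isLowerTriangular _ (hL.submatrix_of_strictMono (trailEmb_strictMono h)),
    det_of_isLowerTriangular _ (hL.submatrix_of_strictMono (trailEmb_strictMono _)),
    Fin.prod_univ_succ]
  simp only [submatrix_apply, hzero, trailEmb_succ]

theorem IsLowerTriangular.diag_pos_of_det_submatrix_trailEmb_pos [LinearOrder R]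
    [IsStrictOrderedRing R] {L : Matrix (Fin n) (Fin n) R} (hL : L.IsLowerTriangular)
    (hpos : ∀ r (h : r ≤ n), 0 < (L.submatrix (trailEmb h) (trailEmb h)).det) (i : Fin n) :
    0 < L i i := by
  have h : n - 1 - i + 1 ≤ n := by omega
  have hsplit := det_submatrix_trailEmb_succ hL h (i := i) (by omega)
  exact (mul_pos_iff_of_pos_right (hpos _ _)).1 (hsplit ▸ hpos _ h)

end Minors

end Matrix

section Iwasawa

variable {n r : ℕ}

theorem trailMinor_pos_of_posDef_mul {b k : Matrix (Fin n) (Fin n) ℝ} (hg : (b * k).PosDef)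
    (hb : b.IsUpperTriangular) (hbd : ∀ i, 0 < b i i) (h : r ≤ n) : 0 < trailMinor k r h := by
  have he := trailEmb_strictMono h
  have hsplit : ((b * k).submatrix (trailEmb h) (trailEmb h)).det =
      (b.submatrix (trailEmb h) (trailEmb h)).det * trailMinor k r h := by
    rw [hb.submatrix_mul he.injective (isUpperSet_range_trailEmb h), det_mul, trailMinor_eq_det]
  have hbpos : 0 < (b.submatrix (trailEmb h) (trailEmb h)).det := by
    rw [det_of_isUpperTriangular (hb.submatrix_of_strictMono he)]
    exact Finset.prod_pos fun m _ => hbd _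
  exact (mul_pos_iff_of_pos_left hbpos).1 (hsplit ▸ (hg.submatrix he.injective).det_pos)

theorem exists_posDef_mul_of_trailMinor_pos (k : Matrix (Fin n) (Fin n) ℝ)
    (hk : ∀ r (h : r ≤ n), 0 < trailMinor k r h) :
    ∃ b : Matrix (Fin n) (Fin n) ℝ,
      b.IsUpperTriangular ∧ (∀ i, 0 < b i i) ∧ (b * k).PosDef := by
  obtain ⟨N, hN, hNd, hL⟩ :=
    exists_isUpperTriangular_mul_isLowerTriangular k fun r h => (hk r h.le).ne'.isUnit
  set L := N * k
  have hLminor : ∀ r (h : r ≤ n), 0 < (L.submatrix (trailEmb h) (trailEmb h)).det := by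
    intro r h
    rw [hN.submatrix_mul (trailEmb_strictMono h).injective (isUpperSet_range_trailEmb h), det_mul,
      det_of_isUpperTriangular (hN.submatrix_of_strictMono (trailEmb_strictMono h))]
    simpa [hNd, ← trailMinor_eq_det] using hk r h
  have hLd := hL.diag_pos_of_det_submatrix_trailEmb_pos hLminor
  have hLt : Lᵀ.IsUpperTriangular := fun _ _ hij => hL hij
  have hLunit : IsUnit L := (isUnit_iff_isUnit_det L).2 <| by
    rw [det_of_isLowerTriangular L hL]
    exact (Finset.prod_pos fun i _ => hLd i).ne'.isUnit
  refine ⟨Lᵀ * N, hLt.mul hN, fun i => ?_, ?_⟩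
  · have hdiag := congrFun (hLt.diag_mul hN) i
    simp only [diag_apply, Pi.mul_apply, transpose_apply, hNd, mul_one] at hdiag
    exact hdiag ▸ hLd i
  · rw [Matrix.mul_assoc, ← conjTranspose_eq_transpose_of_trivial]
    exact PosDef.conjTranspose_mul_self L (mulVec_injective_of_isUnit hLunit)

end Iwasawa

/-- The image of the set of positive definite symmetric matrices under the
Iwasawa projection `g = b * k ↦ k` equals the set of orthogonal matrices with
all trailing principal minors positive. -/
theorem stmt8 {n : ℕ} :
    {k : Matrix (Fin n) (Fin n) ℝ | kᵀ * k = 1 ∧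
        ∃ g b : Matrix (Fin n) (Fin n) ℝ, g.PosDef ∧
          b.BlockTriangular id ∧ (∀ i, 0 < b i i) ∧ g = b * k} =
    {k : Matrix (Fin n) (Fin n) ℝ | kᵀ * k = 1 ∧
        ∀ r : ℕ, 1 ≤ r → ∀ h : r ≤ n, 0 < trailMinor k r h} := by
  ext k
  constructor
  · rintro ⟨hk, g, b, hg, hb, hbd, rfl⟩
    exact ⟨hk, fun r _ h => trailMinor_pos_of_posDef_mul hg hb hbd h⟩
  · rintro ⟨hk, hmin⟩
    have hpos : ∀ r (h : r ≤ n), 0 < trailMinor k r h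
      | 0, h => by rw [trailMinor_zero]; exact one_pos
      | r + 1, h => hmin (r + 1) (Nat.le_add_left 1 r) h
    obtain ⟨b, hb, hbd, hg⟩ := exists_posDef_mul_of_trailMinor_pos k hpos
    exact ⟨hk, _, b, hg, hb, hbd, rfl⟩
end

section
/- For an orthogonal n×n real matrix k, all leading principal minors of k are positive if and only if all trailing principal minors of k are positive. -/
open Matrix

/-- The determinant of the top-left `r × r` submatrix of `B`. -/
def leadMinor {n : ℕ} (B : Matrix (Fin n) (Fin n) ℝ) (r : ℕ) (h : r ≤ n) : ℝ :=
  (B.submatrix (Fin.castLE h) (Fin.castLE h)).det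

/-!
Jacobi's complementary minor identity: if `M = [[A, B], [C, D]]` has inverse `[[A', B'], [C', D']]`,
then `M * [[A', 0], [C', 1]] = [[1, B], [0, D]]`, so `det M * det A' = det D`. For orthogonal `k` the
inverse is `kᵀ`, so the trailing minor of size `s` is `det k` times the leading minor of size `n - s`.
Positive leading minors force `det k > 0` and hence positive trailing minors. Reversing the order of
rows and columns swaps leading and trailing minors and preserves orthogonality, which gives the
converse.
-/

namespace Matrix

variable {R m n : Type*} [CommRing R] [Fintype m] [Fintype n] [DecidableEq m] [DecidableEq n]

theorem det_mul_det_toBlocks₁₁_of_mul_eq_one {M N : Matrix (m ⊕ n) (m ⊕ n) R} (h : M * N = 1) :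
    M.det * N.toBlocks₁₁.det = M.toBlocks₂₂.det := by
  obtain ⟨A, B, C, D, rfl⟩ : ∃ A B C D, M = fromBlocks A B C D :=
    ⟨_, _, _, _, (fromBlocks_toBlocks M).symm⟩
  obtain ⟨A', B', C', D', rfl⟩ : ∃ A B C D, N = fromBlocks A B C D :=
    ⟨_, _, _, _, (fromBlocks_toBlocks N).symm⟩
  rw [fromBlocks_multiply, ← fromBlocks_one, fromBlocks_inj] at h
  obtain ⟨h₁₁, -, h₂₁, -⟩ := h
  have : fromBlocks A B C D * fromBlocks A' 0 C' 1 = fromBlocks 1 B 0 D := by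
    simp [fromBlocks_multiply, h₁₁, h₂₁]
  simpa [det_fromBlocks_zero₂₁, det_fromBlocks_zero₁₂] using congrArg det this

theorem det_toBlocks₂₂_of_mul_transpose_eq_one {M : Matrix (m ⊕ n) (m ⊕ n) R} (h : M * Mᵀ = 1) :
    M.toBlocks₂₂.det = M.det * M.toBlocks₁₁.det := by
  rw [← det_mul_det_toBlocks₁₁_of_mul_eq_one h, ← det_transpose M.toBlocks₁₁]
  rfl

end Matrix

section OrthogonalMinors

variable {n : ℕ}

theorem leadMinor_zero (k : Matrix (Fin n) (Fin n) ℝ) : leadMinor k 0 n.zero_le = 1 :=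
  det_isEmpty

theorem leadMinor_self (k : Matrix (Fin n) (Fin n) ℝ) : leadMinor k n le_rfl = k.det :=
  rfl

theorem leadMinor_submatrix_rev (k : Matrix (Fin n) (Fin n) ℝ) {r : ℕ} (h : r ≤ n) :
    leadMinor (k.submatrix Fin.rev Fin.rev) r h = trailMinor k r h := by
  have hrev : Fin.rev ∘ Fin.castLE h =
      (fun i : Fin r => (⟨n - r + i, by omega⟩ : Fin n)) ∘ Fin.revPerm := by
    ext i
    simp only [Function.comp_apply, Fin.val_rev, Fin.val_castLE, Fin.revPerm_apply]
    omega
  rw [leadMinor, submatrix_submatrix, hrev, ← submatrix_submatrix, det_submatrix_equiv_self]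
  rfl

theorem trailMinor_submatrix_rev (k : Matrix (Fin n) (Fin n) ℝ) {r : ℕ} (h : r ≤ n) :
    trailMinor (k.submatrix Fin.rev Fin.rev) r h = leadMinor k r h := by
  simpa only [submatrix_submatrix, Fin.rev_involutive.comp_self, submatrix_id_id] using
    (leadMinor_submatrix_rev (k.submatrix Fin.rev Fin.rev) h).symm

theorem transpose_mul_self_submatrix_rev {k : Matrix (Fin n) (Fin n) ℝ} (hk : kᵀ * k = 1) :
    (k.submatrix Fin.rev Fin.rev)ᵀ * k.submatrix Fin.rev Fin.rev = 1 := by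
  rw [transpose_submatrix]
  exact (submatrix_mul_equiv kᵀ k Fin.rev Fin.revPerm Fin.rev).trans
    (by rw [hk]; exact submatrix_one_equiv Fin.revPerm)

theorem trailMinor_eq_det_mul_leadMinor {k : Matrix (Fin n) (Fin n) ℝ} (hk : kᵀ * k = 1)
    {r s : ℕ} (hrs : r + s = n) :
    trailMinor k s (by omega) = k.det * leadMinor k r (by omega) := by
  let e : Fin r ⊕ Fin s ≃ Fin n := finSumFinEquiv.trans (finCongr hrs)
  have horth : k.submatrix e e * (k.submatrix e e)ᵀ = 1 := by
    rw [transpose_submatrix, submatrix_mul_equiv, mul_eq_one_comm.mp hk, submatrix_one_equiv]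
  have hinr : e ∘ Sum.inr = fun i : Fin s => (⟨n - s + i, by omega⟩ : Fin n) := by
    ext i
    simp only [e, Equiv.coe_trans, Function.comp_apply, finSumFinEquiv_apply_right, finCongr_apply,
      Fin.val_cast, Fin.val_natAdd]
    omega
  have htrail : trailMinor k s (by omega) = (k.submatrix e e).toBlocks₂₂.det := by
    rw [trailMinor, ← hinr]
    rfl
  rw [htrail, det_toBlocks₂₂_of_mul_transpose_eq_one horth, det_submatrix_equiv_self]
  rfl

theorem trailMinor_pos_of_leadMinor_pos {k : Matrix (Fin n) (Fin n) ℝ} (hk : kᵀ * k = 1)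
    (H : ∀ r : ℕ, 1 ≤ r → ∀ h : r ≤ n, 0 < leadMinor k r h) :
    ∀ s : ℕ, 1 ≤ s → ∀ h : s ≤ n, 0 < trailMinor k s h := by
  intro s hs h
  have hdet : 0 < k.det := leadMinor_self k ▸ H n (hs.trans h) le_rfl
  obtain ⟨r, hrs⟩ : ∃ r, r + s = n := ⟨n - s, Nat.sub_add_cancel h⟩
  rw [trailMinor_eq_det_mul_leadMinor hk hrs]
  rcases r.eq_zero_or_pos with rfl | hr
  · simpa [leadMinor_zero] using hdet
  · exact mul_pos hdet (H r hr _)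

end OrthogonalMinors

theorem stmt9 {n : ℕ} (k : Matrix (Fin n) (Fin n) ℝ) (hk : kᵀ * k = 1) :
    (∀ r : ℕ, 1 ≤ r → ∀ h : r ≤ n, 0 < leadMinor k r h) ↔
    (∀ r : ℕ, 1 ≤ r → ∀ h : r ≤ n, 0 < trailMinor k r h) := by
  refine ⟨trailMinor_pos_of_leadMinor_pos hk, fun H r hr h => ?_⟩
  rw [← trailMinor_submatrix_rev]
  refine trailMinor_pos_of_leadMinor_pos (transpose_mul_self_submatrix_rev hk) ?_ r hr h
  simpa only [leadMinor_submatrix_rev] using H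
end
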